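/- Suppose G is 2-torsion free, Θ: G → G is a k-commuting R-linear map, and the following three conditions hold: (1) Z(A)_k = π_A(Z(G)); (2) Z(B)_k = π_B(Z(G)); (3) there exist m0 ∈ M and n0 ∈ N such that Z(G) = {a + b : a ∈ Z(A), b ∈ Z(B), am0 = m0b, n0a = bn0}. Then Θ(1) ∈ Z(G); moreover δ2(m)m = mμ2(m) for all m ∈ M and nδ3(n) = μ3(n)n for all n ∈ N. -/

import Mathlib

/-!
For an idempotent `g`, the map `x ↦ [x, g]` satisfies `ad³ = ad`, so `[x, g]_k = 0` forces
`[x, g] = 0`. For `m ∈ eG(1-e)` the elements `e ± m` are idempotent, so `e`, `e + m`, `e - m`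
commute with their images under `Θ`; adding and using 2-torsion freeness gives
`[Θ m, m] = 0`, which is `δ2(m) m = m μ2(m)`, and `N` is the same with `1 - e` for `e`.
By linearity `[Θ 1, x]_k = [Θ (x + 1), x + 1]_k - [Θ x, x]_k = 0`, so `Θ 1` commutes with
`e`, `M` and `N`, and its diagonal corners lie in `Z(A)_k` and `Z(B)_k`, hence are corners of
central elements by (1) and (2); the Peirce decomposition then shows `Θ 1` is central.
-/

/-- The iterated commutator: `iterComm 0 x y = x`, `iterComm (i+1) x y = [iterComm i x y, y]`. -/
def iterComm {G : Type*} [Ring G] : ℕ → G → G → G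
  | 0, x, _ => x
  | i + 1, x, y => iterComm i x y * y - y * iterComm i x y

section IterComm

variable {G : Type*} [Ring G]

@[simp]
lemma iterComm_zero (x y : G) : iterComm 0 x y = x := rfl

lemma iterComm_succ (k : ℕ) (x y : G) :
    iterComm (k + 1) x y = iterComm k x y * y - y * iterComm k x y := rfl

lemma iterComm_add (i j : ℕ) (x y : G) :
    iterComm (i + j) x y = iterComm i (iterComm j x y) y := by
  induction i with
  | zero => simp
  | succ i ih => rw [Nat.add_right_comm, iterComm_succ, iterComm_succ, ih]

lemma iterComm_add_left (k : ℕ) (a b y : G) :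
    iterComm k (a + b) y = iterComm k a y + iterComm k b y := by
  induction k with
  | zero => rfl
  | succ k ih => simp only [iterComm_succ, ih, add_mul, mul_add]; abel

lemma iterComm_add_one_right (k : ℕ) (x y : G) : iterComm k x (y + 1) = iterComm k x y := by
  induction k with
  | zero => rfl
  | succ k ih => simp only [iterComm_succ, ih, mul_add, add_mul, mul_one, one_mul]; abel

lemma Commute.mul_iterComm {u y : G} (h : Commute u y) (k : ℕ) (x : G) :
    u * iterComm k x y = iterComm k (u * x) y := by
  induction k with
  | zero => rfl
  | succ k ih => rw [iterComm_succ, iterComm_succ, ← ih, mul_sub, ← mul_assoc, ← mul_assoc,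
      h.eq, mul_assoc, mul_assoc]

lemma Commute.iterComm_mul {u y : G} (h : Commute u y) (k : ℕ) (x : G) :
    iterComm k x y * u = iterComm k (x * u) y := by
  induction k with
  | zero => rfl
  | succ k ih => rw [iterComm_succ, iterComm_succ, ← ih, sub_mul, mul_assoc, mul_assoc,
      ← h.eq, ← mul_assoc]

lemma IsIdempotentElem.iterComm_odd {g : G} (hg : IsIdempotentElem g) (j : ℕ) (x : G) :
    iterComm (2 * j + 1) x g = x * g - g * x := by
  induction j with
  | zero => rfl
  | succ j ih =>
    have hgg : ∀ y : G, g * (g * y) = g * y := fun y => by rw [← mul_assoc, hg.eq]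
    rw [show 2 * (j + 1) + 1 = 2 + (2 * j + 1) by ring, iterComm_add, ih, iterComm_succ,
      iterComm_succ, iterComm_zero]
    simp only [sub_mul, mul_sub, mul_assoc, hg.eq, hgg]
    abel

lemma IsIdempotentElem.commute_of_iterComm_eq_zero {g x : G} (hg : IsIdempotentElem g) {k : ℕ}
    (h : iterComm k x g = 0) : Commute x g := by
  have h' : iterComm (k + 1) x g = 0 := by rw [iterComm_succ, h, zero_mul, mul_zero, sub_self]
  rcases Nat.even_or_odd' k with ⟨j, rfl | rfl⟩
  · exact sub_eq_zero.mp (hg.iterComm_odd j x ▸ h')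
  · exact sub_eq_zero.mp (hg.iterComm_odd j x ▸ h)

end IterComm

section Peirce

variable {G : Type*} [Ring G] {e : G}

lemma IsIdempotentElem.mul_eq_self_of_eq_corner (he : IsIdempotentElem e) {m : G}
    (hm : m = e * m * (1 - e)) : e * m = m := by
  rw [hm, ← mul_assoc, ← mul_assoc, he.eq]

lemma IsIdempotentElem.mul_eq_zero_of_eq_corner (he : IsIdempotentElem e) {m : G}
    (hm : m = e * m * (1 - e)) : m * e = 0 := by
  rw [hm, mul_assoc, sub_mul, one_mul, he.eq, sub_self, mul_zero]

lemma IsIdempotentElem.add_of_eq_corner (he : IsIdempotentElem e) {m : G}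
    (hm : m = e * m * (1 - e)) : IsIdempotentElem (e + m) := by
  have hem := he.mul_eq_self_of_eq_corner hm
  have hme := he.mul_eq_zero_of_eq_corner hm
  have hmm : m * m = 0 := by rw [← hem, mul_assoc, ← mul_assoc m e, hme, zero_mul, mul_zero]
  rw [IsIdempotentElem, add_mul, mul_add, mul_add, he.eq, hem, hme, hmm, add_zero, add_zero]

lemma IsIdempotentElem.sub_of_eq_corner (he : IsIdempotentElem e) {m : G}
    (hm : m = e * m * (1 - e)) : IsIdempotentElem (e - m) := by
  rw [sub_eq_add_neg]
  exact he.add_of_eq_corner (by rw [mul_neg, neg_mul, ← hm])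

lemma IsIdempotentElem.commute_of_eq_corner (he : IsIdempotentElem e) {x : G}
    (hx : x = e * x * e) : Commute e x := by
  have hex : e * x = x := by rw [hx, ← mul_assoc, ← mul_assoc, he.eq]
  have hxe : x * e = x := by rw [hx, mul_assoc, he.eq]
  rw [Commute, SemiconjBy, hex, hxe]

lemma IsIdempotentElem.corner_mul_eq_mul_corner (he : IsIdempotentElem e) {c m : G}
    (hm : m = e * m * (1 - e)) (hcm : Commute c m) : e * c * e * m = m * ((1 - e) * c * (1 - e)) :=
  have hem := he.mul_eq_self_of_eq_corner hm
  have hm1e : m * (1 - e) = m := by rw [mul_sub, mul_one, he.mul_eq_zero_of_eq_corner hm, sub_zero]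
  calc e * c * e * m = e * (c * m) := by rw [mul_assoc, hem, mul_assoc]
    _ = m * c := by rw [hcm.eq, ← mul_assoc, hem]
    _ = m * ((1 - e) * c * (1 - e)) := by
      rw [← mul_assoc, ← mul_assoc, hm1e, ← hcm.eq, mul_assoc, hm1e, hcm.eq]

lemma IsIdempotentElem.commute_corner (he : IsIdempotentElem e) {c z : G} (hce : Commute c e)
    (hz : ∀ y, Commute z y) (hcz : e * c * e = e * z * e) (x : G) : Commute c (e * x * e) := by
  have hc : c * e = e * z * e := by rw [← hcz, ← hce.eq, mul_assoc, he.eq]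
  have hc' : e * c = e * z * e := by rw [← hc, hce.eq]
  have hz' : e * z * e = z * e := by rw [mul_assoc, (hz e).eq, ← mul_assoc, he.eq]
  calc c * (e * x * e) = z * (e * x * e) := by
        rw [← mul_assoc, ← mul_assoc, hc, hz', mul_assoc, mul_assoc, mul_assoc]
    _ = e * x * e * c := by
        rw [mul_assoc (e * x) e c, hc', hz', ← mul_assoc (e * x) z e, ← (hz (e * x)).eq]
        simp only [mul_assoc]

/-- `c` lies in the `k`-center `Z(eGe)_k` of the corner ring `eGe`. -/
def MemCornerKCenter (k : ℕ) (e c : G) : Prop :=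
  c = e * c * e ∧ ∀ x, x = e * x * e → iterComm k c x = 0

lemma IsIdempotentElem.memCornerKCenter_corner (he : IsIdempotentElem e) {k : ℕ} {c : G}
    (hc : ∀ x, iterComm k c x = 0) : MemCornerKCenter k e (e * c * e) := by
  refine ⟨by rw [show e * (e * c * e) * e = e * e * c * (e * e) by noncomm_ring, he.eq],
    fun x hx => ?_⟩
  have hex := he.commute_of_eq_corner hx
  rw [← hex.iterComm_mul, ← hex.mul_iterComm, hc, mul_zero, zero_mul]

lemma eq_sum_corners (e x : G) :
    x = e * x * e + e * x * (1 - e) + (1 - e) * x * e + (1 - e) * x * (1 - e) := by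
  noncomm_ring

lemma IsIdempotentElem.commute_of_commute_corners (he : IsIdempotentElem e) {c z w : G}
    (hce : Commute c e) (hz : ∀ y, Commute z y) (hcz : e * c * e = e * z * e)
    (hw : ∀ y, Commute w y) (hcw : (1 - e) * c * (1 - e) = (1 - e) * w * (1 - e))
    (hM : ∀ m, m = e * m * (1 - e) → Commute c m)
    (hN : ∀ n, n = (1 - e) * n * e → Commute c n) (x : G) : Commute c x := by
  have hM' : ∀ y, Commute c (e * y * (1 - e)) := fun y => hM _ <| by
    rw [← mul_assoc, ← mul_assoc, he.eq, mul_assoc _ (1 - e), he.one_sub.eq]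
  have hN' : ∀ y, Commute c ((1 - e) * y * e) := fun y => hN _ <| by
    rw [← mul_assoc, ← mul_assoc, he.one_sub.eq, mul_assoc _ e, he.eq]
  rw [eq_sum_corners e x]
  exact (((he.commute_corner hce hz hcz x).add_right (hM' x)).add_right (hN' x)).add_right
    (he.one_sub.commute_corner ((Commute.one_right c).sub_right hce) hw hcw x)

end Peirce

section KCommuting

variable {G : Type*} [Ring G] {F : Type*} [FunLike F G G] [AddMonoidHomClass F G G]
  {Θ : F} {k : ℕ}

lemma commute_map_self_of_eq_corner (hΘ : ∀ g, iterComm k (Θ g) g = 0)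
    (htf : ∀ g : G, g + g = 0 → g = 0) {e m : G} (he : IsIdempotentElem e)
    (hm : m = e * m * (1 - e)) : Commute (Θ m) m := by
  have hE := he.commute_of_iterComm_eq_zero (hΘ e)
  have hA := (he.add_of_eq_corner hm).commute_of_iterComm_eq_zero (hΘ (e + m))
  have hB := (he.sub_of_eq_corner hm).commute_of_iterComm_eq_zero (hΘ (e - m))
  rw [map_add] at hA
  rw [map_sub] at hB
  refine sub_eq_zero.mp (htf _ ?_)
  calc Θ m * m - m * Θ m + (Θ m * m - m * Θ m)
      = ((Θ e + Θ m) * (e + m) - (e + m) * (Θ e + Θ m))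
        + ((Θ e - Θ m) * (e - m) - (e - m) * (Θ e - Θ m))
        - 2 * (Θ e * e - e * Θ e) := by noncomm_ring
    _ = 0 := by rw [hA.eq, hB.eq, hE.eq]; simp

lemma iterComm_map_one (hΘ : ∀ g, iterComm k (Θ g) g = 0) (x : G) :
    iterComm k (Θ 1) x = 0 := by
  have h := hΘ (x + 1)
  rwa [map_add, iterComm_add_left, iterComm_add_one_right, iterComm_add_one_right, hΘ x,
    zero_add] at h

lemma commute_map_one_of_eq_corner (hΘ : ∀ g, iterComm k (Θ g) g = 0) {e m : G}
    (he : IsIdempotentElem e) (hm : m = e * m * (1 - e)) : Commute (Θ 1) m := by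
  have hE := he.commute_of_iterComm_eq_zero (iterComm_map_one hΘ e)
  have hA := (he.add_of_eq_corner hm).commute_of_iterComm_eq_zero (iterComm_map_one hΘ (e + m))
  simpa using hA.sub_right hE

end KCommuting

theorem kCommuting_theta_one_central_general
    {R : Type*} [CommRing R] {G : Type*} [Ring G] [Algebra R G]
    (e : G) (he : e * e = e) (f : G) (hf : f = 1 - e)
    (htf : ∀ g : G, g + g = 0 → g = 0)
    (k : ℕ)
    -- (1): Z(A)_k = π_A(Z(G))
    (hZAk : ∀ c : G,
      (c = e * c * e ∧ ∀ x : G, x = e * x * e → iterComm k c x = 0) ↔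
      (∃ z : G, (∀ x : G, z * x = x * z) ∧ c = e * z * e))
    -- (2): Z(B)_k = π_B(Z(G))
    (hZBk : ∀ c : G,
      (c = f * c * f ∧ ∀ y : G, y = f * y * f → iterComm k c y = 0) ↔
      (∃ z : G, (∀ x : G, z * x = x * z) ∧ c = f * z * f))
    (Θ : G →ₗ[R] G) (hΘ : ∀ g : G, iterComm k (Θ g) g = 0) :
    (∀ x : G, Θ 1 * x = x * Θ 1) ∧
    (∀ m : G, m = e * m * f → (e * Θ m * e) * m = m * (f * Θ m * f)) ∧
    (∀ n : G, n = f * n * e → n * (e * Θ n * e) = (f * Θ n * f) * n) := by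
  subst hf
  have he : IsIdempotentElem e := he
  have hNcorner : ∀ {n}, n = (1 - e) * n * e → n = (1 - e) * n * (1 - (1 - e)) := by
    simp only [sub_sub_cancel, imp_self, implies_true]
  refine ⟨?_, fun m hm => he.corner_mul_eq_mul_corner hm
      (commute_map_self_of_eq_corner hΘ htf he hm), fun n hn => ?_⟩
  · obtain ⟨z, hz, hcz⟩ := (hZAk _).mp (he.memCornerKCenter_corner (iterComm_map_one hΘ))
    obtain ⟨w, hw, hcw⟩ := (hZBk _).mp (he.one_sub.memCornerKCenter_corner (iterComm_map_one hΘ))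
    exact he.commute_of_commute_corners (he.commute_of_iterComm_eq_zero (iterComm_map_one hΘ e))
      hz hcz hw hcw (fun _ hm => commute_map_one_of_eq_corner hΘ he hm)
      (fun _ hn => commute_map_one_of_eq_corner hΘ he.one_sub (hNcorner hn))
  · have h := he.one_sub.corner_mul_eq_mul_corner (hNcorner hn)
      (commute_map_self_of_eq_corner hΘ htf he.one_sub (hNcorner hn))
    rw [sub_sub_cancel] at h
    exact h.symm

/-- under the hypotheses of the main theorem (`G` 2-torsion free and
conditions (1)-(3)), for a k-commuting map `Θ` of `G` one has `Θ(1) ∈ Z(G)`,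
`δ2(m) m = m μ2(m)` for all `m ∈ M` and `n δ3(n) = μ3(n) n` for all `n ∈ N`, where
`δ2(m) = eΘ(m)e`, `μ2(m) = fΘ(m)f`, `δ3(n) = eΘ(n)e`, `μ3(n) = fΘ(n)f`. -/
theorem kCommuting_theta_one_central
    {R : Type*} [CommRing R] {G : Type*} [Ring G] [Algebra R G]
    (e : G) (he : e * e = e) (f : G) (hf : f = 1 - e)
    (hMN : (∃ m : G, m = e * m * f ∧ m ≠ 0) ∨ (∃ n : G, n = f * n * e ∧ n ≠ 0))
    (hMfaithL : ∀ a : G, a = e * a * e → (∀ m : G, m = e * m * f → a * m = 0) → a = 0)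
    (hMfaithR : ∀ b : G, b = f * b * f → (∀ m : G, m = e * m * f → m * b = 0) → b = 0)
    (htf : ∀ g : G, g + g = 0 → g = 0)
    (k : ℕ) (hk : 2 ≤ k)
    -- (1): Z(A)_k = π_A(Z(G))
    (hZAk : ∀ c : G,
      (c = e * c * e ∧ ∀ x : G, x = e * x * e → iterComm k c x = 0) ↔
      (∃ z : G, (∀ x : G, z * x = x * z) ∧ c = e * z * e))
    -- (2): Z(B)_k = π_B(Z(G))
    (hZBk : ∀ c : G,
      (c = f * c * f ∧ ∀ y : G, y = f * y * f → iterComm k c y = 0) ↔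
      (∃ z : G, (∀ x : G, z * x = x * z) ∧ c = f * z * f))
    -- (3): description of Z(G) via m0 and n0
    (hZG : ∃ m0 n0 : G, m0 = e * m0 * f ∧ n0 = f * n0 * e ∧
      ∀ z : G, (∀ x : G, z * x = x * z) ↔
        ∃ a b : G, (a = e * a * e ∧ ∀ x : G, x = e * x * e → a * x = x * a) ∧
          (b = f * b * f ∧ ∀ y : G, y = f * y * f → b * y = y * b) ∧
          a * m0 = m0 * b ∧ n0 * a = b * n0 ∧ z = a + b)
    (Θ : G →ₗ[R] G) (hΘ : ∀ g : G, iterComm k (Θ g) g = 0) :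
    (∀ x : G, Θ 1 * x = x * Θ 1) ∧
    (∀ m : G, m = e * m * f → (e * Θ m * e) * m = m * (f * Θ m * f)) ∧
    (∀ n : G, n = f * n * e → n * (e * Θ n * e) = (f * Θ n * f) * n) :=
  kCommuting_theta_one_central_general e he f hf htf k hZAk hZBk Θ hΘ
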